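/- arXiv:2411.19800 — 4 statements merged into one kernel-verified Lean document; each statement's English description precedes it below -/
import Mathlib

section
/- Let G be a tree and e = uv an edge with deg(u) = 2 and deg(v) ≥ 3. Then meg(G \ {e}) = meg(G) + 1. -/
open SimpleGraph

variable {V : Type*}

/-- A pair of vertices `u, v` monitors edge `e` in `G` if `u` and `v` are connected
and `e` lies on every shortest path (walk of length `G.dist u v`) between them. -/
def monitors (G : SimpleGraph V) (u v : V) (e : Sym2 V) : Prop :=
  G.Reachable u v ∧ ∀ p : G.Walk u v, p.length = G.dist u v → e ∈ p.edges

/-- `M` is a monitoring edge-geodetic set of `G`. -/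
def IsMEGSet (G : SimpleGraph V) (M : Set V) : Prop :=
  ∀ e ∈ G.edgeSet, ∃ u ∈ M, ∃ v ∈ M, monitors G u v e

/-- The monitoring edge-geodetic number: minimum size of an MEG-set. -/
noncomputable def meg (G : SimpleGraph V) : ℕ :=
  sInf {n | ∃ M : Finset V, IsMEGSet G ↑M ∧ M.card = n}

/-!
In a finite forest every MEG-set contains every leaf, because a leaf is interior to no path,
and the leaves form an MEG-set, because every edge lies on a path between two leaves (extend a
longest path through the edge) and in a forest that path is the only shortest path between its
ends. Hence `meg G` is the number of leaves. Deleting `uv` turns `u` into a new leaf, while `v`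
keeps at least two neighbours and no other degree changes.
-/

namespace SimpleGraph

variable {G : SimpleGraph V}

def leaves (G : SimpleGraph V) [Fintype V] [DecidableRel G.Adj] : Finset V :=
  {x | G.degree x = 1}

section Paths

variable {a b x : V}

lemma exists_isPath_mem_edges_forall_length_le [Finite V] {e : Sym2 V} (he : e ∈ G.edgeSet) :
    ∃ (a b : V) (p : G.Walk a b), p.IsPath ∧ e ∈ p.edges ∧
      ∀ (a' b' : V) (q : G.Walk a' b'), q.IsPath → e ∈ q.edges → q.length ≤ p.length := by
  have := Fintype.ofFinite V
  let s := {n | ∃ (a b : V) (p : G.Walk a b), p.IsPath ∧ e ∈ p.edges ∧ p.length = n}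
  have hs : s.Finite := (Set.finite_lt_nat (Fintype.card V)).subset
    fun n ⟨_, _, _, hp, _, hn⟩ ↦ hn ▸ hp.length_lt
  obtain ⟨c, d⟩ := e
  have hcd : G.Adj c d := he
  obtain ⟨_, ⟨a, b, p, hp, hep, rfl⟩, hmax⟩ :=
    hs.exists_maximal ⟨1, c, d, .cons hcd .nil, by simp [hcd.ne], by simp, rfl⟩
  exact ⟨a, b, p, hp, hep, fun a' b' q hq heq ↦
    not_lt.mp fun hlt ↦ (hmax ⟨a', b', q, hq, heq, rfl⟩ hlt.le).not_gt hlt⟩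

lemma IsAcyclic.degree_eq_one_of_forall_adj_mem_support (hG : G.IsAcyclic)
    [Fintype (G.neighborSet b)] {p : G.Walk a b} (hp : p.IsPath) (hnil : ¬p.Nil)
    (hmax : ∀ w, G.Adj b w → w ∈ p.support) : G.degree b = 1 :=
  degree_eq_one_iff_existsUnique_adj.mpr ⟨p.penultimate, (p.adj_penultimate hnil).symm,
    fun w hw ↦ hG.eq_penultimate_of_adj_end hp hw (hmax w hw)⟩

lemma IsAcyclic.exists_isPath_mem_edges_degree_eq_one [Fintype V] [DecidableRel G.Adj]
    (hG : G.IsAcyclic) {e : Sym2 V} (he : e ∈ G.edgeSet) :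
    ∃ (a b : V) (p : G.Walk a b), p.IsPath ∧ e ∈ p.edges ∧ G.degree a = 1 ∧ G.degree b = 1 := by
  obtain ⟨a, b, p, hp, hep, hmax⟩ := exists_isPath_mem_edges_forall_length_le he
  have hnil : ¬p.Nil := fun h ↦ by simp [Walk.edges_eq_nil.mpr h] at hep
  refine ⟨a, b, p, hp, hep, ?_, ?_⟩
  · refine hG.degree_eq_one_of_forall_adj_mem_support hp.reverse (by simpa using hnil)
      fun w hw ↦ by_contra fun hws ↦ ?_
    rw [Walk.support_reverse, List.mem_reverse] at hws
    have hlen := hmax _ _ (p.cons hw.symm) (hp.cons hws) (by simp [hep])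
    simp at hlen
  · refine hG.degree_eq_one_of_forall_adj_mem_support hp hnil fun w hw ↦ by_contra fun hws ↦ ?_
    have hlen := hmax _ _ (p.concat hw) (hp.concat hws hw) (by simp [Walk.edges_concat, hep])
    simp at hlen

lemma IsAcyclic.monitors_of_isPath (hG : G.IsAcyclic) {p : G.Walk a b} (hp : p.IsPath)
    {e : Sym2 V} (he : e ∈ p.edges) : monitors G a b e :=
  ⟨p.reachable, fun q hq ↦ by
    rwa [Subtype.mk.inj <| (hG.subsingleton_path a b).elim
      ⟨q, q.isPath_of_length_eq_dist hq⟩ ⟨p, hp⟩]⟩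

lemma Walk.IsPath.eq_or_eq_of_degree_eq_one [Fintype (G.neighborSet x)] {p : G.Walk a b}
    (hp : p.IsPath) (hx : x ∈ p.support) (hdeg : G.degree x = 1) : x = a ∨ x = b := by
  by_contra! ⟨hxa, hxb⟩
  obtain ⟨q, r, -, -, rfl⟩ := hp.mem_support_iff_exists_append.mp hx
  have hq : ¬q.Nil := Walk.not_nil_of_ne (Ne.symm hxa)
  have hr : ¬r.Nil := Walk.not_nil_of_ne hxb
  obtain ⟨y, -, hy⟩ := degree_eq_one_iff_existsUnique_adj.mp hdeg
  have hsame : q.penultimate = r.snd :=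
    (hy _ (q.adj_penultimate hq).symm).trans (hy _ (r.adj_snd hr)).symm
  exact hp.ne_of_mem_support_of_append (r.adj_snd hr).ne' (q.getVert_mem_support _)
    (r.getVert_mem_support _) hsame

end Paths

lemma IsMEGSet.mem_of_degree_eq_one {M : Set V} (hM : IsMEGSet G M) {x : V}
    [Fintype (G.neighborSet x)] (hx : G.degree x = 1) : x ∈ M := by
  obtain ⟨y, hxy, -⟩ := degree_eq_one_iff_existsUnique_adj.mp hx
  obtain ⟨a, ha, b, hb, hab, hmon⟩ := hM s(x, y) hxy
  obtain ⟨p, hp⟩ := hab.exists_walk_length_eq_dist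
  rcases (p.isPath_of_length_eq_dist hp).eq_or_eq_of_degree_eq_one
    (p.fst_mem_support_of_mem_edges (hmon p hp)) hx with rfl | rfl
  exacts [ha, hb]

section DeleteEdge

variable {e : Sym2 V} {x : V}

lemma degree_deleteEdges_singleton_of_notMem [Fintype (G.neighborSet x)]
    [Fintype ((G.deleteEdges {e}).neighborSet x)] (hx : x ∉ e) :
    (G.deleteEdges {e}).degree x = G.degree x := by
  refine congrArg Finset.card (Finset.ext fun y ↦ ?_)
  simp only [mem_neighborFinset, deleteEdges_adj, Set.mem_singleton_iff, and_iff_left_iff_imp]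
  rintro - rfl
  exact hx (Sym2.mem_mk_left _ _)

lemma degree_deleteEdges_singleton_add_one [Fintype (G.neighborSet x)]
    [Fintype ((G.deleteEdges {e}).neighborSet x)] (he : e ∈ G.edgeSet) (hx : x ∈ e) :
    (G.deleteEdges {e}).degree x + 1 = G.degree x := by
  classical
  obtain ⟨y, rfl⟩ := Sym2.mem_iff_exists.mp hx
  have hnbr : (G.deleteEdges {s(x, y)}).neighborFinset x = (G.neighborFinset x).erase y := by
    ext z
    simp only [mem_neighborFinset, deleteEdges_adj, Set.mem_singleton_iff, Finset.mem_erase,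
      Sym2.congr_right]
    tauto
  rw [← card_neighborFinset_eq_degree, hnbr,
    Finset.card_erase_add_one ((mem_neighborFinset _ _ _).mpr he), card_neighborFinset_eq_degree]

end DeleteEdge

variable [Fintype V] [DecidableRel G.Adj]

lemma IsAcyclic.isMEGSet_leaves (hG : G.IsAcyclic) : IsMEGSet G (G.leaves : Set V) := by
  intro e he
  obtain ⟨a, b, p, hp, hep, ha, hb⟩ := hG.exists_isPath_mem_edges_degree_eq_one he
  exact ⟨a, by simpa [leaves] using ha, b, by simpa [leaves] using hb,
    hG.monitors_of_isPath hp hep⟩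

lemma IsAcyclic.meg_eq_card_leaves (hG : G.IsAcyclic) : meg G = G.leaves.card := by
  have hmeg : G.leaves.card ∈ {n | ∃ M : Finset V, IsMEGSet G ↑M ∧ M.card = n} :=
    ⟨_, hG.isMEGSet_leaves, rfl⟩
  refine le_antisymm (Nat.sInf_le hmeg) ?_
  obtain ⟨M, hM, hcard⟩ := Nat.sInf_mem ⟨_, hmeg⟩
  rw [meg, ← hcard]
  exact Finset.card_le_card fun x hx ↦ hM.mem_of_degree_eq_one (by simpa [leaves] using hx)

lemma leaves_deleteEdges_of_degree_eq_two [DecidableEq V] {u v : V} (huv : G.Adj u v)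
    (hu : G.degree u = 2) (hv : 3 ≤ G.degree v) [DecidableRel (G.deleteEdges {s(u, v)}).Adj] :
    (G.deleteEdges {s(u, v)}).leaves = insert u G.leaves := by
  ext x
  simp only [leaves, Finset.mem_insert, Finset.mem_filter, Finset.mem_univ, true_and]
  by_cases hx : x ∈ s(u, v)
  · have hdeg := degree_deleteEdges_singleton_add_one huv hx
    rcases Sym2.mem_iff.mp hx with rfl | rfl
    · simp only [true_or, iff_true]
      omega
    · simp only [huv.ne', false_or]
      omega
  · have hxu : x ≠ u := fun h ↦ hx (h ▸ Sym2.mem_mk_left _ _)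
    rw [degree_deleteEdges_singleton_of_notMem hx]
    simp only [hxu, false_or]

end SimpleGraph

/-- Removing an edge `uv` with `deg u = 2` and `deg v ≥ 3` from a tree increases `meg` by 1. -/
theorem tree_deleteEdge_deg2_deg3 [Fintype V] (G : SimpleGraph V) [DecidableRel G.Adj]
    (hT : G.IsTree) (u v : V) (huv : G.Adj u v)
    (hu : G.degree u = 2) (hv : 3 ≤ G.degree v) :
    meg (G.deleteEdges {s(u, v)}) = meg G + 1 := by
  classical
  have hG' : (G.deleteEdges {s(u, v)}).IsAcyclic := hT.isAcyclic.anti (deleteEdges_le _)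
  have hu_leaf : u ∉ G.leaves := by simp [leaves, hu]
  rw [hG'.meg_eq_card_leaves, hT.isAcyclic.meg_eq_card_leaves,
    leaves_deleteEdges_of_degree_eq_two huv hu hv, Finset.card_insert_of_notMem hu_leaf]
end

section
/- Let G be a connected graph, v a simplicial vertex of G with deg(v) ≥ 2, and e an edge incident to v. Then meg(G \ {e}) ≤ meg(G) + 1. -/
open SimpleGraph

variable {V : Type*}

/-
Let `M` be a minimum MEG-set of `G`; then `M ∪ {u}` is an MEG-set of `G - vu`.
A shortest walk between two vertices other than the simplicial vertex `v` never passes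
through `v`, since the two neighbours of `v` on it are equal or adjacent. Hence pairs of `M`
avoiding `v` keep their distance and their shortest walks in `G - vu`. For a pair `(v, b)`, a
shortest walk meets `vu` at most as its first edge: if it avoids `vu`, the pair still monitors the
same edges; otherwise `d(u, b) = d(v, b) - 1`, and `(u, b)` monitors every edge other than `vu`
that `(v, b)` did.
-/

section

variable {G H : SimpleGraph V} {a b u v x y : V} {d e : Sym2 V}

theorem monitors.symm (h : monitors G a b e) : monitors G b a e :=
  ⟨h.1.symm, fun p hp => by
    simpa using h.2 p.reverse (by rw [Walk.length_reverse, hp, dist_comm])⟩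

theorem monitors.ne (h : monitors G a b e) : a ≠ b := by
  rintro rfl
  simpa using h.2 .nil (by simp)

theorem monitors_of_adj (h : G.Adj x y) : monitors G x y s(x, y) := by
  refine ⟨h.reachable, fun p hp => ?_⟩
  rw [dist_eq_one_iff_adj.2 h] at hp
  cases p with
  | nil => simp at hp
  | cons _ q =>
    cases q with
    | nil => simp
    | cons => simp at hp

theorem monitors.of_le (hHG : H ≤ G) (hr : H.Reachable a b) (hd : H.dist a b = G.dist a b)
    (h : monitors G a b e) : monitors H a b e :=
  ⟨hr, fun p hp => by simpa using h.2 (p.mapLe hHG) (by simp [hp, hd])⟩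

theorem monitors.deleteEdges_of_notMem_edges (p : G.Walk a b) (hp : p.length = G.dist a b)
    (hd : d ∉ p.edges) (h : monitors G a b e) : monitors (G.deleteEdges {d}) a b e := by
  set p' := p.toDeleteEdge d hd
  refine h.of_le (G.deleteEdges_le _) p'.reachable
    (le_antisymm ?_ (p'.reachable.dist_anti (G.deleteEdges_le _)))
  simpa [p', hp] using dist_le p'

theorem monitors.of_adj_of_dist_eq (h : monitors G v b e) (huv : G.Adj v u)
    (hd : G.dist v b = G.dist u b + 1) (he : e ≠ s(v, u)) : monitors G u b e := by
  refine ⟨huv.symm.reachable.trans h.1, fun q hq => ?_⟩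
  simpa [he] using h.2 (.cons huv q) (by simp [hq, hd])

theorem SimpleGraph.Walk.notMem_support_of_length_eq_dist (hv : G.IsClique (G.neighborSet v))
    (p : G.Walk x y) (hp : p.length = G.dist x y) (hx : x ≠ v) (hy : y ≠ v) :
    v ∉ p.support := by
  classical
  intro hvp
  set q := p.takeUntil v hvp
  set r := p.dropUntil v hvp
  have hq : ¬q.Nil := Walk.not_nil_of_ne hx
  have hr : ¬r.Nil := Walk.not_nil_of_ne hy.symm
  have hab : G.dist q.penultimate r.snd ≤ 1 := by
    by_cases h : q.penultimate = r.snd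
    · simp [h]
    · exact (dist_eq_one_iff_adj.2 (hv (q.adj_penultimate hq).symm (r.adj_snd hr) h)).le
  have hlen : q.length + r.length = p.length := by
    rw [← Walk.length_append, p.take_spec hvp]
  have htri := (q.dropLast.reachable.dist_triangle_left y).trans
    (Nat.add_le_add_left (r.tail.reachable.dist_triangle_right q.penultimate) _)
  have hxa := dist_le q.dropLast
  have hby := dist_le r.tail
  have := q.length_dropLast_add_one hq
  have := r.length_tail_add_one hr
  omega

theorem monitors.deleteEdges_of_ne (hv : G.IsClique (G.neighborSet v)) (ha : a ≠ v)
    (hb : b ≠ v) (h : monitors G a b e) : monitors (G.deleteEdges {s(v, u)}) a b e := by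
  obtain ⟨p, hp⟩ := h.1.exists_walk_length_eq_dist
  exact h.deleteEdges_of_notMem_edges p hp fun hvu =>
    p.notMem_support_of_length_eq_dist hv hp ha hb (p.fst_mem_support_of_mem_edges hvu)

theorem monitors.deleteEdges_or_of_left (hv : G.IsClique (G.neighborSet v)) (hb : b ≠ v)
    (he : e ≠ s(v, u)) (h : monitors G v b e) :
    monitors (G.deleteEdges {s(v, u)}) v b e ∨ monitors (G.deleteEdges {s(v, u)}) u b e := by
  obtain ⟨p, hp⟩ := h.1.exists_walk_length_eq_dist
  obtain ⟨c, hvc, p₀, rfl⟩ := p.exists_eq_cons_of_ne hb.symm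
  have hp₀ : p₀.length = G.dist c b := length_eq_dist_of_subwalk hp (Walk.isSubwalk_cons p₀ hvc)
  by_cases hcu : c = u
  · subst hcu
    right
    refine (h.of_adj_of_dist_eq hvc ?_ he).deleteEdges_of_ne hv hvc.ne' hb
    simpa [hp₀] using hp.symm
  · left
    refine h.deleteEdges_of_notMem_edges _ hp ?_
    have : s(v, u) ∉ p₀.edges := fun hvu =>
      p₀.notMem_support_of_length_eq_dist hv hp₀ hvc.ne' hb (p₀.fst_mem_support_of_mem_edges hvu)
    simp [this, Ne.symm hcu, hvc.ne]

theorem IsMEGSet.deleteEdges_insert {M : Set V} (hv : G.IsClique (G.neighborSet v))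
    (hM : IsMEGSet G M) : IsMEGSet (G.deleteEdges {s(v, u)}) (insert u M) := by
  intro e he
  rw [edgeSet_deleteEdges, Set.mem_sdiff, Set.mem_singleton_iff] at he
  have monitored : ∀ a ∈ M, ∀ b ∈ M, b ≠ v → monitors G a b e →
      ∃ x ∈ insert u M, ∃ y ∈ insert u M, monitors (G.deleteEdges {s(v, u)}) x y e := by
    intro a ha b hb hbv h
    by_cases hav : a = v
    · subst hav
      rcases h.deleteEdges_or_of_left hv hbv he.2 with h' | h'
      · exact ⟨a, .inr ha, b, .inr hb, h'⟩
      · exact ⟨u, .inl rfl, b, .inr hb, h'⟩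
    · exact ⟨a, .inr ha, b, .inr hb, h.deleteEdges_of_ne hv hav hbv⟩
  obtain ⟨a, ha, b, hb, h⟩ := hM e he.1
  by_cases hbv : b = v
  · exact monitored b hb a ha (hbv ▸ h.ne) h.symm
  · exact monitored a ha b hb hbv h

theorem meg_le_card {M : Finset V} (hM : IsMEGSet G ↑M) : meg G ≤ M.card :=
  Nat.sInf_le ⟨M, hM, rfl⟩

theorem exists_isMEGSet_card_eq_meg [Fintype V] (G : SimpleGraph V) :
    ∃ M : Finset V, IsMEGSet G ↑M ∧ M.card = meg G := by
  refine Nat.sInf_mem (s := {n | ∃ M : Finset V, IsMEGSet G M ∧ M.card = n})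
    ⟨_, Finset.univ, fun e he => ?_, rfl⟩
  induction e using Sym2.ind with
  | _ x y => exact ⟨x, by simp, y, by simp, monitors_of_adj he⟩

end

theorem deleteEdge_simplicial_meg_le_general [Fintype V] (G : SimpleGraph V) (v : V)
    (hsimp : ∀ a ∈ G.neighborSet v, ∀ b ∈ G.neighborSet v, a ≠ b → G.Adj a b)
    (u : V) :
    meg (G.deleteEdges {s(v, u)}) ≤ meg G + 1 := by
  classical
  obtain ⟨M, hM, hcard⟩ := exists_isMEGSet_card_eq_meg G
  have hM' : IsMEGSet (G.deleteEdges {s(v, u)}) ↑(insert u M) := by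
    rw [Finset.coe_insert]
    exact hM.deleteEdges_insert fun a ha b hb => hsimp a ha b hb
  calc meg (G.deleteEdges {s(v, u)}) ≤ (insert u M).card := meg_le_card hM'
    _ ≤ M.card + 1 := Finset.card_insert_le u M
    _ = meg G + 1 := by rw [hcard]

/-- Removing an edge incident to a simplicial vertex of degree at least `2`
increases `meg` by at most `1`. -/
theorem deleteEdge_simplicial_meg_le [Fintype V] (G : SimpleGraph V) [DecidableRel G.Adj]
    (hconn : G.Connected) (v : V)
    (hsimp : ∀ a ∈ G.neighborSet v, ∀ b ∈ G.neighborSet v, a ≠ b → G.Adj a b)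
    (hdeg : 2 ≤ G.degree v) (u : V) (huv : G.Adj v u) :
    meg (G.deleteEdges {s(v, u)}) ≤ meg G + 1 :=
  deleteEdge_simplicial_meg_le_general G v hsimp u
end

section
/- Let G be a connected graph, v a simplicial vertex of G with deg(v) ≥ 2, and e an edge incident to v. Then meg(G) − deg(v) ≤ meg(G \ {e}). -/
open SimpleGraph

variable {V : Type*}

lemma aux_edges_of_length_one {H : SimpleGraph V} {a b : V} (p : H.Walk a b)
    (h : p.length = 1) : p.edges = [s(a, b)] := by
  cases p with
  | nil => simp at h
  | cons h' q =>
    cases q with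
    | nil => simp
    | cons h'' q' => simp [Walk.length_cons] at h

lemma aux_monitors_adj {H : SimpleGraph V} {a b : V} (h : H.Adj a b) :
    monitors H a b s(a, b) := by
  refine ⟨h.reachable, fun p hp => ?_⟩
  rw [dist_eq_one_iff_adj.mpr h] at hp
  rw [aux_edges_of_length_one p hp]
  simp

lemma aux_univ_MEG [Fintype V] (H : SimpleGraph V) :
    IsMEGSet H ↑(Finset.univ : Finset V) := by
  intro e he
  induction e with
  | _ a b => exact ⟨a, by simp, b, by simp, aux_monitors_adj (by simpa using he)⟩

lemma monitors_symm {H : SimpleGraph V} {a b : V} {e : Sym2 V}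
    (h : monitors H a b e) : monitors H b a e := by
  refine ⟨h.1.symm, fun p hp => ?_⟩
  have := h.2 p.reverse (by rw [Walk.length_reverse, hp, dist_comm])
  simpa [Walk.edges_reverse] using this

lemma aux_not_mem_support {H : SimpleGraph V} {v x y : V}
    (hs : ∀ a ∈ H.neighborSet v, ∀ b ∈ H.neighborSet v, a ≠ b → H.Adj a b)
    (hx : x ≠ v) (hy : y ≠ v) (p : H.Walk x y) (hp : p.length = H.dist x y) :
    v ∉ p.support := by
  classical
  intro hv
  have hpath := p.isPath_of_length_eq_dist hp
  obtain ⟨b, hvb, r', hr⟩ := Walk.exists_eq_cons_of_ne (Ne.symm hy) (p.dropUntil v hv)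
  obtain ⟨a, hva, q'', hq⟩ :=
    Walk.exists_eq_cons_of_ne (Ne.symm hx) (p.takeUntil v hv).reverse
  have hqe : p.takeUntil v hv = (Walk.cons hva q'').reverse := by
    rw [← hq, Walk.reverse_reverse]
  -- a ≠ b
  have hsup : p.support = (p.takeUntil v hv).support ++ (p.dropUntil v hv).support.tail := by
    conv_lhs => rw [← p.take_spec hv]
    exact Walk.support_append _ _
  have hnd : ((p.takeUntil v hv).support ++ (p.dropUntil v hv).support.tail).Nodup := by
    rw [← hsup]; exact hpath.support_nodup
  have hamem : a ∈ (p.takeUntil v hv).support := by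
    rw [hqe, Walk.support_reverse, List.mem_reverse]
    simp [Walk.support_cons]
  have hbmem : b ∈ (p.dropUntil v hv).support.tail := by
    rw [hr]
    simp [Walk.support_cons]
  have hab : a ≠ b := by
    intro h
    exact (List.disjoint_of_nodup_append hnd) hamem (h ▸ hbmem)
  have hadj : H.Adj a b := hs a (by simpa using hva) b (by simpa using hvb) hab
  have W : H.Walk x y := q''.reverse.append (Walk.cons hadj r')
  have hlen : (q''.reverse.append (Walk.cons hadj r')).length + 1 = p.length := by
    have := congrArg Walk.length (p.take_spec hv)
    rw [Walk.length_append] at this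
    rw [hqe, hr] at this
    simp [Walk.length_append, Walk.length_cons, Walk.length_reverse] at this ⊢
    omega
  have := dist_le (q''.reverse.append (Walk.cons hadj r'))
  omega

section
variable {G : SimpleGraph V} {v u w0 : V}

lemma aux_adj' (huv : G.Adj v u) {a b : V} (hab : G.Adj a b) (ha : a ≠ v) (hb : b ≠ v) :
    (G.deleteEdges {s(v, u)}).Adj a b := by
  rw [deleteEdges_adj]
  refine ⟨hab, ?_⟩
  simp only [Set.mem_singleton_iff, Sym2.eq_iff]
  rintro (⟨rfl, rfl⟩ | ⟨rfl, rfl⟩)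
  · exact ha rfl
  · exact hb rfl

lemma aux_adj'2 (huv : G.Adj v u) {b : V} (hvb : G.Adj v b) (hb : b ≠ u) :
    (G.deleteEdges {s(v, u)}).Adj v b := by
  rw [deleteEdges_adj]
  refine ⟨hvb, ?_⟩
  simp only [Set.mem_singleton_iff, Sym2.eq_iff]
  rintro (⟨-, rfl⟩ | ⟨rfl, rfl⟩)
  · exact hb rfl
  · exact huv.ne rfl

lemma aux_reach' (huv : G.Adj v u) (hvw : G.Adj v w0) (hwu : w0 ≠ u) (hadjwu : G.Adj w0 u)
    {x y : V} (hr : G.Reachable x y) : (G.deleteEdges {s(v, u)}).Reachable x y := by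
  obtain ⟨p⟩ := hr
  induction p with
  | nil => exact Reachable.refl _
  | @cons a c _ h q ih =>
    refine Reachable.trans ?_ ih
    by_cases he : s(a, c) = s(v, u)
    · have hvu' : (G.deleteEdges {s(v, u)}).Reachable v u :=
        ((aux_adj'2 huv hvw hwu).reachable).trans
          (aux_adj' huv hadjwu hvw.ne' huv.ne').reachable
      rw [Sym2.eq_iff] at he
      rcases he with ⟨rfl, rfl⟩ | ⟨rfl, rfl⟩
      · exact hvu'
      · exact hvu'.symm
    · exact (deleteEdges_adj.mpr ⟨h, by simpa using he⟩).reachable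

end

lemma aux_mon_ne {G : SimpleGraph V} {v u : V} (huv : G.Adj v u)
    (hsimp : ∀ a ∈ G.neighborSet v, ∀ b ∈ G.neighborSet v, a ≠ b → G.Adj a b)
    {x y : V} {e : Sym2 V} (hx : x ≠ v) (hy : y ≠ v)
    (h : monitors (G.deleteEdges {s(v, u)}) x y e) : monitors G x y e := by
  have hsub : G.deleteEdges {s(v, u)} ≤ G := deleteEdges_le _
  refine ⟨h.1.mono hsub, fun p hp => ?_⟩
  have hvp : v ∉ p.support := aux_not_mem_support hsimp hx hy p hp
  have hedges : ∀ e' ∈ p.edges, e' ∈ (G.deleteEdges {s(v, u)}).edgeSet := by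
    intro e' he'
    rw [edgeSet_deleteEdges]
    refine ⟨p.edges_subset_edgeSet he', ?_⟩
    simp only [Set.mem_singleton_iff]
    rintro rfl
    exact hvp (p.fst_mem_support_of_mem_edges he')
  have h1 := dist_le (p.transfer _ hedges)
  rw [Walk.length_transfer] at h1
  have h2 := h.1.dist_anti hsub
  have h3 : (p.transfer _ hedges).length = (G.deleteEdges {s(v, u)}).dist x y := by
    rw [Walk.length_transfer]; omega
  have := h.2 (p.transfer _ hedges) h3
  rwa [Walk.edges_transfer] at this

lemma aux_mon_v {G : SimpleGraph V} {v u w0 : V} (hconn : G.Connected) (huv : G.Adj v u)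
    (hsimp : ∀ a ∈ G.neighborSet v, ∀ b ∈ G.neighborSet v, a ≠ b → G.Adj a b)
    (hw0 : G.Adj v w0) (hw0u : w0 ≠ u)
    {y : V} {e : Sym2 V}
    (heN : ∀ z w : V, (z = v ∨ G.Adj v z) → (w = v ∨ G.Adj v w) → e ≠ s(z, w))
    (h : monitors (G.deleteEdges {s(v, u)}) v y e) :
    ∃ m, G.Adj v m ∧ monitors G m y e := by
  have hsub : G.deleteEdges {s(v, u)} ≤ G := deleteEdges_le _
  have hy : y ≠ v := by
    rintro rfl
    have := h.2 Walk.nil (by simp [SimpleGraph.dist_self])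
    simp at this
  have hvy : v ≠ y := Ne.symm hy
  have hdd : G.dist v y ≤ (G.deleteEdges {s(v, u)}).dist v y := h.1.dist_anti hsub
  have hd0 : G.dist v y ≠ 0 := by
    rw [dist_ne_zero_iff_ne_and_reachable]
    exact ⟨hvy, hconn.preconnected v y⟩
  have htrans : ∀ {a b : V} (t : G.Walk a b), v ∉ t.support →
      ∀ e' ∈ t.edges, e' ∈ (G.deleteEdges {s(v, u)}).edgeSet := by
    intro a b t hvt e' he'
    rw [edgeSet_deleteEdges]
    refine ⟨t.edges_subset_edgeSet he', ?_⟩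
    simp only [Set.mem_singleton_iff]
    rintro rfl
    exact hvt (t.fst_mem_support_of_mem_edges he')
  by_cases hc : (G.deleteEdges {s(v, u)}).dist v y = G.dist v y
  · obtain ⟨r, hr⟩ := h.1.exists_walk_length_eq_dist
    obtain ⟨w, hvw', r1, rfl⟩ := Walk.exists_eq_cons_of_ne hvy r
    have hvw : G.Adj v w := hsub hvw'
    have hr1 : r1.length + 1 = (G.deleteEdges {s(v, u)}).dist v y := by simpa using hr
    have hup : G.dist w y ≤ r1.length := by
      have := dist_le (r1.transfer G (fun e' he' => edgeSet_mono hsub (r1.edges_subset_edgeSet he')))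
      rwa [Walk.length_transfer] at this
    have hlow : G.dist v y ≤ G.dist w y + 1 := by
      obtain ⟨t0, ht0⟩ := (hconn.preconnected w y).exists_walk_length_eq_dist
      have := dist_le (Walk.cons hvw t0)
      rw [Walk.length_cons, ht0] at this
      omega
    have hwy : G.dist w y + 1 = G.dist v y := by omega
    refine ⟨w, hvw, hconn.preconnected w y, fun t ht => ?_⟩
    have hvt : v ∉ t.support := aux_not_mem_support hsimp hvw.ne' hy t ht
    have he := h.2 (Walk.cons hvw' (t.transfer _ (htrans t hvt)))
      (by rw [Walk.length_cons, Walk.length_transfer, ht]; omega)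
    rw [Walk.edges_cons, Walk.edges_transfer] at he
    rcases List.mem_cons.mp he with h' | he'
    · exact absurd h' (heN v w (Or.inl rfl) (Or.inr hvw))
    · exact he'
  · obtain ⟨p, hplen⟩ := (hconn.preconnected v y).exists_walk_length_eq_dist
    obtain ⟨c, hvc, p1, rfl⟩ := Walk.exists_eq_cons_of_ne hvy p
    have hplen' : p1.length + 1 = G.dist v y := by simpa using hplen
    have hvp1 : v ∉ p1.support := by
      have hpath := (Walk.cons hvc p1).isPath_of_length_eq_dist hplen
      have := hpath.support_nodup
      rw [Walk.support_cons] at this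
      exact (List.nodup_cons.mp this).1
    have hcu : c = u := by
      by_contra hcu
      have hedges : ∀ e' ∈ (Walk.cons hvc p1).edges, e' ∈ (G.deleteEdges {s(v, u)}).edgeSet := by
        intro e' he'
        rw [Walk.edges_cons] at he'
        rcases List.mem_cons.mp he' with rfl | he'
        · exact (SimpleGraph.mem_edgeSet _).mpr (aux_adj'2 huv hvc hcu)
        · exact htrans p1 hvp1 e' he'
      have := dist_le ((Walk.cons hvc p1).transfer _ hedges)
      rw [Walk.length_transfer] at this
      rw [Walk.length_cons] at this hplen
      omega
    subst hcu
    have hdu_le : G.dist c y ≤ p1.length := dist_le p1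
    have hdu_ge : G.dist v y ≤ G.dist c y + 1 := by
      obtain ⟨t0, ht0⟩ := (hconn.preconnected c y).exists_walk_length_eq_dist
      have := dist_le (Walk.cons hvc t0)
      rw [Walk.length_cons, ht0] at this
      omega
    have hdu : G.dist c y + 1 = G.dist v y := by omega
    have hw0u' : G.Adj w0 c := hsimp w0 (by simpa using hw0) c (by simpa using hvc) hw0u
    have ha1 : (G.deleteEdges {s(v, c)}).Adj v w0 := aux_adj'2 hvc hw0 hw0u
    have ha2 : (G.deleteEdges {s(v, c)}).Adj w0 c := aux_adj' hvc hw0u' hw0.ne' hvc.ne'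
    refine ⟨c, hvc, hconn.preconnected c y, fun q hq => ?_⟩
    have hvq : v ∉ q.support := aux_not_mem_support hsimp hvc.ne' hy q hq
    have hd'le : (G.deleteEdges {s(v, c)}).dist v y ≤ q.length + 2 := by
      have := dist_le (Walk.cons ha1 (Walk.cons ha2 (q.transfer _ (htrans q hvq))))
      simpa [Walk.length_transfer] using this
    have he := h.2 (Walk.cons ha1 (Walk.cons ha2 (q.transfer _ (htrans q hvq))))
      (by simp only [Walk.length_cons, Walk.length_transfer]; omega)
    rw [Walk.edges_cons, Walk.edges_cons, Walk.edges_transfer] at he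
    rcases List.mem_cons.mp he with h' | he'
    · exact absurd h' (heN v w0 (Or.inl rfl) (Or.inr hw0))
    rcases List.mem_cons.mp he' with h' | he''
    · exact absurd h' (heN w0 c (Or.inr hw0) (Or.inr hvc))
    exact he''

/-- Removing an edge incident to a simplicial vertex `v` of degree at least `2`
decreases `meg` by at most `deg v`. -/
theorem deleteEdge_simplicial_meg_ge [Fintype V] (G : SimpleGraph V) [DecidableRel G.Adj]
    (hconn : G.Connected) (v : V)
    (hsimp : ∀ a ∈ G.neighborSet v, ∀ b ∈ G.neighborSet v, a ≠ b → G.Adj a b)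
    (hdeg : 2 ≤ G.degree v) (u : V) (huv : G.Adj v u) :
    meg G - G.degree v ≤ meg (G.deleteEdges {s(v, u)}) := by
  classical
  obtain ⟨w0, hw0mem, hw0u⟩ : ∃ w0 ∈ G.neighborFinset v, w0 ≠ u := by
    by_contra hcon
    push_neg at hcon
    have hsb : G.neighborFinset v ⊆ {u} := fun z hz => by simp [hcon z hz]
    have := Finset.card_le_card hsb
    rw [Finset.card_singleton] at this
    rw [← card_neighborFinset_eq_degree] at hdeg
    omega
  have hw0 : G.Adj v w0 := by simpa using hw0mem
  have hne' : Set.Nonempty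
      {n | ∃ M : Finset V, IsMEGSet (G.deleteEdges {s(v, u)}) ↑M ∧ M.card = n} :=
    ⟨_, Finset.univ, aux_univ_MEG _, rfl⟩
  obtain ⟨M', hM', hcard⟩ := Nat.sInf_mem hne'
  have hsimp' : ∀ a ∈ (G.deleteEdges {s(v, u)}).neighborSet v,
      ∀ b ∈ (G.deleteEdges {s(v, u)}).neighborSet v, a ≠ b →
      (G.deleteEdges {s(v, u)}).Adj a b := by
    intro a ha b hb hab
    have ha' : (G.deleteEdges {s(v, u)}).Adj v a := by simpa using ha
    have hb' : (G.deleteEdges {s(v, u)}).Adj v b := by simpa using hb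
    have haG : G.Adj v a := (deleteEdges_le _) ha'
    have hbG : G.Adj v b := (deleteEdges_le _) hb'
    exact aux_adj' huv (hsimp a (by simpa using haG) b (by simpa using hbG) hab) haG.ne' hbG.ne'
  have hvM' : v ∈ M' := by
    have he0 : s(v, w0) ∈ (G.deleteEdges {s(v, u)}).edgeSet :=
      (SimpleGraph.mem_edgeSet _).mpr (aux_adj'2 huv hw0 hw0u)
    obtain ⟨x, hx, y, hyM, hmon⟩ := hM' _ he0
    by_contra hvM
    have hxv : x ≠ v := fun h => hvM (h ▸ hx)
    have hyv : y ≠ v := fun h => hvM (h ▸ hyM)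
    obtain ⟨r, hr⟩ := hmon.1.exists_walk_length_eq_dist
    have hme := hmon.2 r hr
    exact aux_not_mem_support hsimp' hxv hyv r hr (r.fst_mem_support_of_mem_edges hme)
  have hM : ∀ z, (z = v ∨ G.Adj v z) → z ∈ (↑(M' ∪ G.neighborFinset v) : Set V) := by
    rintro z (rfl | hz)
    · simp [hvM']
    · simp [hz]
  have hM2 : ∀ z ∈ (↑M' : Set V), z ∈ (↑(M' ∪ G.neighborFinset v) : Set V) := by
    intro z hz
    simp only [Finset.coe_union, Set.mem_union]
    exact Or.inl hz
  have hMEG : IsMEGSet G ↑(M' ∪ G.neighborFinset v) := by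
    intro e he
    revert he
    refine Sym2.ind ?_ e
    intro a b he
    have hab : G.Adj a b := (SimpleGraph.mem_edgeSet _).mp he
    by_cases hNab : (a = v ∨ G.Adj v a) ∧ (b = v ∨ G.Adj v b)
    · exact ⟨a, hM a hNab.1, b, hM b hNab.2, aux_monitors_adj hab⟩
    · have heN : ∀ z w : V, (z = v ∨ G.Adj v z) → (w = v ∨ G.Adj v w) →
          s(a, b) ≠ s(z, w) := by
        intro z w hz hw heq
        rw [Sym2.eq_iff] at heq
        rcases heq with ⟨rfl, rfl⟩ | ⟨rfl, rfl⟩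
        · exact hNab ⟨hz, hw⟩
        · exact hNab ⟨hw, hz⟩
      have he' : s(a, b) ∈ (G.deleteEdges {s(v, u)}).edgeSet := by
        rw [edgeSet_deleteEdges]
        refine ⟨he, ?_⟩
        simp only [Set.mem_singleton_iff]
        exact heN v u (Or.inl rfl) (Or.inr huv)
      obtain ⟨x, hx, y, hy, hmon⟩ := hM' _ he'
      by_cases hxv : x = v
      · subst hxv
        obtain ⟨m, hm, hmon'⟩ := aux_mon_v hconn huv hsimp hw0 hw0u heN hmon
        exact ⟨m, hM m (Or.inr hm), y, hM2 y hy, hmon'⟩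
      · by_cases hyv : y = v
        · subst hyv
          obtain ⟨m, hm, hmon'⟩ := aux_mon_v hconn huv hsimp hw0 hw0u heN (monitors_symm hmon)
          exact ⟨m, hM m (Or.inr hm), x, hM2 x hx, hmon'⟩
        · exact ⟨x, hM2 x hx, y, hM2 y hy, aux_mon_ne huv hsimp hxv hyv hmon⟩
  have h1 : meg G ≤ (M' ∪ G.neighborFinset v).card := Nat.sInf_le ⟨_, hMEG, rfl⟩
  have h2 : (M' ∪ G.neighborFinset v).card ≤ M'.card + (G.neighborFinset v).card :=
    Finset.card_union_le _ _
  have h3 : (G.neighborFinset v).card = G.degree v := card_neighborFinset_eq_degree _ _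
  have hcard' : M'.card = meg (G.deleteEdges {s(v, u)}) := hcard
  omega
end

section
/- For every n ≥ 5 there exists a graph G on n vertices with meg(G) = n (a MEG-extremal graph) and an edge e of G such that meg(G \ {e}) < n. Concretely, take a clique on n−2 vertices containing two distinguished vertices u₁, u₂, add two new vertices v₁, v₂ each adjacent to both u₁ and u₂; then meg(G) = n, while removing any edge among {u₁v₁, u₁v₂, u₂v₁, u₂v₂} yields a graph G' with meg(G') < n. -/
open SimpleGraph

variable {V : Type*}

lemma walk_len1_edges {G : SimpleGraph V} {a b : V} (p : G.Walk a b)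
    (hp : p.length = 1) : p.edges = [s(a, b)] := by
  cases p with
  | nil => simp at hp
  | cons h q =>
    cases q with
    | nil => simp
    | cons h' q' => simp [SimpleGraph.Walk.length_cons] at hp

lemma walk_len2_edges {G : SimpleGraph V} {a b : V} (p : G.Walk a b)
    (hp : p.length = 2) : ∃ w, G.Adj a w ∧ G.Adj w b ∧ p.edges = [s(a, w), s(w, b)] := by
  cases p with
  | nil => simp at hp
  | cons h q =>
    cases q with
    | nil => simp at hp
    | cons h' q' =>
      cases q' with
      | nil => exact ⟨_, h, h', by simp⟩
      | cons h'' q'' => simp [SimpleGraph.Walk.length_cons] at hp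

lemma dist_eq_two {G : SimpleGraph V} {u w v : V} (h1 : G.Adj u w) (h2 : G.Adj w v)
    (hne : u ≠ v) (hnadj : ¬ G.Adj u v) : G.dist u v = 2 := by
  have hr : G.Reachable u v := ((Walk.cons h1 (Walk.cons h2 Walk.nil)).reachable)
  have hle : G.dist u v ≤ 2 := by
    simpa using SimpleGraph.dist_le (Walk.cons h1 (Walk.cons h2 Walk.nil))
  have h0 : G.dist u v ≠ 0 := fun h =>
    (SimpleGraph.dist_eq_zero_iff_eq_or_not_reachable.mp h).elim hne (fun h' => h' hr)
  have h1' : G.dist u v ≠ 1 := fun h => hnadj (SimpleGraph.dist_eq_one_iff_adj.mp h)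
  omega

lemma adj_monitors {G : SimpleGraph V} {a b : V} (h : G.Adj a b) :
    monitors G a b s(a, b) := by
  refine ⟨h.reachable, fun p hp => ?_⟩
  rw [SimpleGraph.dist_eq_one_iff_adj.mpr h] at hp
  rw [walk_len1_edges p hp]
  simp

lemma not_monitors_two_common {G : SimpleGraph V} {u v w₁ w₂ : V}
    (h1 : G.Adj u w₁) (h2 : G.Adj w₁ v) (h3 : G.Adj u w₂) (h4 : G.Adj w₂ v)
    (hw : w₁ ≠ w₂) (huv : u ≠ v) (hnadj : ¬ G.Adj u v) (e : Sym2 V) :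
    ¬ monitors G u v e := by
  rintro ⟨-, hmon⟩
  have hd : G.dist u v = 2 := dist_eq_two h1 h2 huv hnadj
  have m1 := hmon (Walk.cons h1 (Walk.cons h2 Walk.nil)) (by simp [hd])
  have m2 := hmon (Walk.cons h3 (Walk.cons h4 Walk.nil)) (by simp [hd])
  simp only [Walk.edges_cons, Walk.edges_nil, List.mem_cons, List.not_mem_nil, or_false,
    List.mem_singleton] at m1 m2
  have nu1 : u ≠ w₁ := h1.ne
  have nv1 : w₁ ≠ v := h2.ne
  have nu2 : u ≠ w₂ := h3.ne
  have nv2 : w₂ ≠ v := h4.ne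
  rcases m1 with rfl | rfl <;> rcases m2 with h | h <;>
    rw [Sym2.eq_iff] at h <;> tauto

lemma monitors_of_unique_neighbor {G : SimpleGraph V} {v s c : V}
    (hvs : G.Adj v s) (huniq : ∀ w, G.Adj v w → w = s) (hsc : G.Adj s c) (hcv : c ≠ v) :
    monitors G v c s(v, s) ∧ monitors G v c s(s, c) := by
  have hnadj : ¬ G.Adj v c := fun h => hsc.ne' (huniq c h)
  have hd : G.dist v c = 2 := dist_eq_two hvs hsc hcv.symm hnadj
  have key : ∀ p : G.Walk v c, p.length = G.dist v c → p.edges = [s(v, s), s(s, c)] := by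
    intro p hp
    rw [hd] at hp
    obtain ⟨w, ha, hb, he⟩ := walk_len2_edges p hp
    obtain rfl := huniq w ha
    exact he
  have hr : G.Reachable v c := (Walk.cons hvs (Walk.cons hsc Walk.nil)).reachable
  exact ⟨⟨hr, fun p hp => by rw [key p hp]; simp⟩,
         ⟨hr, fun p hp => by rw [key p hp]; simp⟩⟩

/-- For every `n ≥ 5`, the graph on `Fin n` formed by a clique on the first `n - 2`
vertices together with two extra vertices `v₁, v₂`, each adjacent to the clique
vertices `u₁, u₂`, is MEG-extremal (`meg G = n`), and deleting any of the four edges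
`u₁v₁, u₁v₂, u₂v₁, u₂v₂` destroys extremality. -/
theorem megExtremal_deleteEdge (n : ℕ) (hn : 5 ≤ n)
    (G : SimpleGraph (Fin n))
    (hG : G = SimpleGraph.fromRel (fun a b =>
      (a.val < n - 2 ∧ b.val < n - 2) ∨ (n - 2 ≤ a.val ∧ b.val < 2)))
    (u₁ u₂ v₁ v₂ : Fin n)
    (hu1 : u₁.val = 0) (hu2 : u₂.val = 1) (hv1 : v₁.val = n - 2) (hv2 : v₂.val = n - 1) :
    meg G = n ∧
    ∀ e ∈ ({s(u₁, v₁), s(u₁, v₂), s(u₂, v₁), s(u₂, v₂)} : Set (Sym2 (Fin n))),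
      meg (G.deleteEdges {e}) < n := by
  have hadj : ∀ a b : Fin n, G.Adj a b ↔ a ≠ b ∧
      ((a.val < n - 2 ∧ b.val < n - 2) ∨ (n - 2 ≤ a.val ∧ b.val < 2) ∨
        (n - 2 ≤ b.val ∧ a.val < 2)) := by
    subst hG
    intro a b
    rw [SimpleGraph.fromRel_adj]
    tauto
  have hu12 : u₁ ≠ u₂ := Fin.ne_of_val_ne (by omega)
  -- u₁ and u₂ are dominating vertices
  have hu1d : ∀ x : Fin n, x ≠ u₁ → G.Adj u₁ x := by
    intro x hx
    rw [hadj]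
    refine ⟨Ne.symm hx, ?_⟩
    have : x.val ≠ u₁.val := fun h => hx (Fin.ext h)
    omega
  have hu2d : ∀ x : Fin n, x ≠ u₂ → G.Adj u₂ x := by
    intro x hx
    rw [hadj]
    refine ⟨Ne.symm hx, ?_⟩
    have : x.val ≠ u₂.val := fun h => hx (Fin.ext h)
    omega
  -- every vertex has a neighbor
  have hnbr : ∀ x : Fin n, ∃ y, G.Adj x y := by
    intro x
    by_cases hx : x = u₁
    · exact ⟨u₂, hx ▸ hu1d u₂ hu12.symm⟩
    · exact ⟨u₁, (hu1d x hx).symm⟩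
  -- characterization of monitoring pairs in G
  have mon_char : ∀ a b : Fin n, ∀ e : Sym2 (Fin n),
      monitors G a b e → G.Adj a b ∧ e = s(a, b) := by
    intro a b e hmon
    by_cases hab : a = b
    · exfalso
      subst hab
      have := hmon.2 Walk.nil (by simp [SimpleGraph.dist_self])
      simp at this
    by_cases hGab : G.Adj a b
    · refine ⟨hGab, ?_⟩
      have := hmon.2 hGab.toWalk (by
        simp [SimpleGraph.dist_eq_one_iff_adj.mpr hGab])
      simpa using this
    · exfalso
      have ha1 : a ≠ u₁ := by rintro rfl; exact hGab (hu1d b (Ne.symm hab))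
      have hb1 : b ≠ u₁ := by rintro rfl; exact hGab ((hu1d a ha1).symm)
      have ha2 : a ≠ u₂ := by rintro rfl; exact hGab (hu2d b (Ne.symm hab))
      have hb2 : b ≠ u₂ := by rintro rfl; exact hGab ((hu2d a ha2).symm)
      exact not_monitors_two_common (hu1d a ha1).symm (hu1d b hb1)
        (hu2d a ha2).symm (hu2d b hb2) hu12 hab hGab e hmon
  -- the universe is an MEG set
  have hMEGuniv : IsMEGSet G ↑(Finset.univ : Finset (Fin n)) := by
    intro e he
    induction e using Sym2.ind with
    | _ a b =>
      rw [SimpleGraph.mem_edgeSet] at he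
      exact ⟨a, by simp, b, by simp, adj_monitors he⟩
  have hmem : n ∈ {m | ∃ M : Finset (Fin n), IsMEGSet G ↑M ∧ M.card = m} :=
    ⟨Finset.univ, hMEGuniv, by simp⟩
  constructor
  · refine le_antisymm (Nat.sInf_le hmem) (le_csInf ⟨n, hmem⟩ ?_)
    rintro m ⟨M, hM, rfl⟩
    have hsub : (Finset.univ : Finset (Fin n)) ⊆ M := by
      intro x _
      obtain ⟨y, hxy⟩ := hnbr x
      obtain ⟨a, haM, b, hbM, hmon⟩ := hM s(x, y) (G.mem_edgeSet.mpr hxy)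
      obtain ⟨-, heq⟩ := mon_char a b _ hmon
      rcases Sym2.eq_iff.mp heq with ⟨rfl, -⟩ | ⟨rfl, -⟩
      · exact Finset.mem_coe.mp haM
      · exact Finset.mem_coe.mp hbM
    calc n = (Finset.univ : Finset (Fin n)).card := by simp
      _ ≤ M.card := Finset.card_le_card hsub
  · -- deletion part
    have haux : ∀ a b s' : Fin n, a.val < 2 → s'.val < 2 → a ≠ s' → n - 2 ≤ b.val →
        meg (G.deleteEdges {s(a, b)}) < n := by
      intro a b s' ha hs' has hb
      set G' := G.deleteEdges {s(a, b)} with hG'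
      have has' : a.val ≠ s'.val := fun h => has (Fin.ext h)
      have hadj' : ∀ x y : Fin n, G'.Adj x y ↔ G.Adj x y ∧ s(x, y) ≠ s(a, b) := by
        intro x y
        rw [hG', SimpleGraph.deleteEdges_adj]
        simp
      have hbs' : G'.Adj b s' := by
        rw [hadj']
        refine ⟨(hadj b s').mpr ⟨Fin.ne_of_val_ne (by omega), by omega⟩, ?_⟩
        rw [ne_eq, Sym2.eq_iff]
        push_neg
        constructor
        · intro h; exact absurd (congrArg Fin.val h) (by omega)
        · intro _; exact Ne.symm has
      have huniq : ∀ w, G'.Adj b w → w = s' := by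
        intro w hw
        rw [hadj'] at hw
        obtain ⟨hw1, hw2⟩ := hw
        rw [hadj] at hw1
        have hwlt : w.val < 2 := by omega
        have hwa : w ≠ a := by
          rintro rfl
          exact hw2 (Sym2.eq_swap)
        have : w.val ≠ a.val := fun h => hwa (Fin.ext h)
        exact Fin.ext (by omega)
      have hc0 : (2 : ℕ) < n := by omega
      set c₀ : Fin n := ⟨2, hc0⟩ with hc0def
      have hc0v : c₀.val = 2 := rfl
      have hsc : G'.Adj s' c₀ := by
        rw [hadj']
        refine ⟨(hadj s' c₀).mpr ⟨Fin.ne_of_val_ne (by omega), by omega⟩, ?_⟩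
        rw [ne_eq, Sym2.eq_iff]
        push_neg
        constructor
        · intro h; exact absurd (congrArg Fin.val h) (by omega)
        · intro h; exact absurd (congrArg Fin.val h) (by omega)
      have hc0b : c₀ ≠ b := Fin.ne_of_val_ne (by omega)
      have hbs : b ≠ s' := Fin.ne_of_val_ne (by omega)
      have hc0s : c₀ ≠ s' := Fin.ne_of_val_ne (by omega)
      have hbmem : b ∈ ↑(Finset.univ \ {s'} : Finset (Fin n)) := by simp [hbs]
      have hc0mem : c₀ ∈ ↑(Finset.univ \ {s'} : Finset (Fin n)) := by simp [hc0s]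
      have key : ∀ x y : Fin n, G'.Adj x y →
          ∃ u ∈ ↑(Finset.univ \ {s'} : Finset (Fin n)),
            ∃ v ∈ ↑(Finset.univ \ {s'} : Finset (Fin n)), monitors G' u v s(x, y) := by
          intro x y he'
          by_cases hxs : x = s'
          · have he2 : G'.Adj s' y := by rwa [hxs] at he'
            by_cases hyb : y = b
            · refine ⟨b, hbmem, c₀, hc0mem, ?_⟩
              rw [hxs, hyb, Sym2.eq_swap]
              exact (monitors_of_unique_neighbor hbs' huniq hsc hc0b).1
            · refine ⟨b, hbmem, y, ?_, ?_⟩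
              · simp [he2.ne']
              · rw [hxs]
                exact (monitors_of_unique_neighbor hbs' huniq he2 hyb).2
          · by_cases hys : y = s'
            · have he2 : G'.Adj s' x := by
                rw [hys] at he'; exact he'.symm
              by_cases hxb : x = b
              · refine ⟨b, hbmem, c₀, hc0mem, ?_⟩
                rw [hys, hxb]
                exact (monitors_of_unique_neighbor hbs' huniq hsc hc0b).1
              · refine ⟨b, hbmem, x, ?_, ?_⟩
                · simp [he2.ne']
                · rw [hys, Sym2.eq_swap]
                  exact (monitors_of_unique_neighbor hbs' huniq he2 hxb).2
            · exact ⟨x, by simp [hxs], y, by simp [hys], adj_monitors he'⟩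
      have hMEG : IsMEGSet G' ↑(Finset.univ \ {s'} : Finset (Fin n)) :=
        fun e' => Sym2.ind (fun x y he' => key x y (G'.mem_edgeSet.mp he')) e'
      have hcard : (Finset.univ \ {s'} : Finset (Fin n)).card = n - 1 := by
        rw [Finset.card_sdiff_of_subset (by simp)]
        simp
      have hle : meg G' ≤ n - 1 := Nat.sInf_le ⟨_, hMEG, hcard⟩
      omega
    intro e he
    simp only [Set.mem_insert_iff, Set.mem_singleton_iff] at he
    rcases he with rfl | rfl | rfl | rfl
    · exact haux u₁ v₁ u₂ (by omega) (by omega) hu12 (by omega)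
    · exact haux u₁ v₂ u₂ (by omega) (by omega) hu12 (by omega)
    · exact haux u₂ v₁ u₁ (by omega) (by omega) hu12.symm (by omega)
    · exact haux u₂ v₂ u₁ (by omega) (by omega) hu12.symm (by omega)
end
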